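/- arXiv:1610.01475 — 4 statements merged into one kernel-verified Lean document; each statement's English description precedes it below -/
import Mathlib

section
/- If G is a graph of diameter d and metric dimension k, and H(G) is the distance hypergraph of G, then (TC(H(G)) − 1)/d ≤ k ≤ TC(H(G)), where TC denotes the minimum size of a test cover. -/
variable {V : Type*}

/-- A set `R` of vertices of a graph `G` is a resolving set. -/
def SimpleGraph.IsResolvingSet (G : SimpleGraph V) (R : Set V) : Prop :=
  ∀ u v : V, u ≠ v → ∃ x ∈ R, G.dist x u ≠ G.dist x v

/-- The metric dimension of `G` is `k`. -/
def SimpleGraph.HasMetricDim (G : SimpleGraph V) (k : ℕ) : Prop :=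
  (∃ R : Set V, G.IsResolvingSet R ∧ R.Finite ∧ R.ncard = k) ∧
    ∀ R : Set V, G.IsResolvingSet R → R.Finite → k ≤ R.ncard

/-- The hyperedges of the distance hypergraph of `G`: all balls `B(v,r)`. -/
def SimpleGraph.distBalls (G : SimpleGraph V) : Set (Set V) :=
  {B | ∃ (v : V) (r : ℕ), B = {u | G.dist v u ≤ r}}

/-- A test cover of the distance hypergraph of `G`: a family `C` of balls covering every
vertex and separating every pair of distinct vertices. -/
def SimpleGraph.IsDistTestCover (G : SimpleGraph V) (C : Set (Set V)) : Prop :=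
  C ⊆ G.distBalls ∧ (∀ v : V, ∃ e ∈ C, v ∈ e) ∧
    ∀ u v : V, u ≠ v → ∃ e ∈ C, (u ∈ e ∧ v ∉ e) ∨ (v ∈ e ∧ u ∉ e)

/-- If `G` is a graph of diameter `d` and metric dimension `k`, and `H(G)` is the distance
hypergraph of `G`, then `(TC(H(G)) − 1)/d ≤ k ≤ TC(H(G))`, i.e.
`TC(H(G)) − 1 ≤ d·k` and `k ≤ TC(H(G))`, where `TC` is the minimum test cover size. -/
theorem statement11 [Fintype V] (G : SimpleGraph V) (hG : G.Connected)
    (d k t : ℕ) (hd : G.diam = d) (hk : G.HasMetricDim k)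
    (ht : (∃ C : Set (Set V), G.IsDistTestCover C ∧ C.ncard = t) ∧
      ∀ C : Set (Set V), G.IsDistTestCover C → t ≤ C.ncard) :
    t - 1 ≤ d * k ∧ k ≤ t := by
  have hne : Nonempty V := hG.nonempty
  -- the ediam is finite
  have hdtop : G.ediam ≠ ⊤ := by
    obtain ⟨u, v, huv⟩ := G.exists_edist_eq_ediam_of_finite
    rw [← huv]
    exact (SimpleGraph.edist_ne_top_iff_reachable).mpr (hG.preconnected u v)
  constructor
  · -- t - 1 ≤ d * k : build a test cover from a resolving set
    obtain ⟨R, hR, hRfin, hRk⟩ := hk.1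
    obtain ⟨v0⟩ := hne
    set f : V × ℕ → Set V := fun p => {u | G.dist p.1 u ≤ p.2} with hf
    set C : Set (Set V) := f '' (R ×ˢ Set.Iio d) ∪ {Set.univ} with hC
    have huniv : (Set.univ : Set V) = {u | G.dist v0 u ≤ d} := by
      ext u
      simp only [Set.mem_univ, Set.mem_setOf_eq, true_iff]
      exact hd ▸ G.dist_le_diam hdtop
    have hTC : G.IsDistTestCover C := by
      refine ⟨?_, ?_, ?_⟩
      · rintro e (⟨⟨x, r⟩, _, rfl⟩ | he)
        · exact ⟨x, r, rfl⟩
        · exact ⟨v0, d, by simpa using he ▸ huniv⟩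
      · intro v
        exact ⟨Set.univ, Or.inr rfl, Set.mem_univ v⟩
      · intro u v huv
        obtain ⟨x, hxR, hxd⟩ := hR u v huv
        rcases lt_or_gt_of_ne hxd with h | h
        · refine ⟨f (x, G.dist x u), Or.inl ⟨(x, G.dist x u), ⟨hxR, ?_⟩, rfl⟩,
            Or.inl ⟨by simp [hf], by simp [hf]; exact h⟩⟩
          exact Set.mem_Iio.mpr (lt_of_lt_of_le h (hd ▸ G.dist_le_diam hdtop))
        · refine ⟨f (x, G.dist x v), Or.inl ⟨(x, G.dist x v), ⟨hxR, ?_⟩, rfl⟩,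
            Or.inr ⟨by simp [hf], by simp [hf]; exact h⟩⟩
          exact Set.mem_Iio.mpr (lt_of_lt_of_le h (hd ▸ G.dist_le_diam hdtop))
    have hprodfin : (R ×ˢ Set.Iio d).Finite := hRfin.prod (Set.finite_Iio d)
    have hcard : C.ncard ≤ d * k + 1 := by
      calc C.ncard ≤ (f '' (R ×ˢ Set.Iio d)).ncard + ({Set.univ} : Set (Set V)).ncard :=
            Set.ncard_union_le _ _
        _ ≤ (R ×ˢ Set.Iio d).ncard + 1 := by
            rw [Set.ncard_singleton]
            exact Nat.add_le_add_right (Set.ncard_image_le hprodfin) 1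
        _ = d * k + 1 := by
            congr 1
            calc (R ×ˢ Set.Iio d).ncard = Nat.card ↥(R ×ˢ Set.Iio d) :=
                  (Nat.card_coe_set_eq _).symm
              _ = Nat.card (↥R × ↥(Set.Iio d)) := Nat.card_congr (Equiv.Set.prod _ _)
              _ = Nat.card ↥R * Nat.card ↥(Set.Iio d) := Nat.card_prod _ _
              _ = d * k := by
                  rw [Nat.card_coe_set_eq, Nat.card_coe_set_eq, hRk,
                    ← Finset.coe_Iio, Set.ncard_coe_finset, Nat.card_Iio, Nat.mul_comm]
    have := ht.2 C hTC
    omega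
  · -- k ≤ t : extract a resolving set of ball centers from a minimal test cover
    obtain ⟨C, hC, hCt⟩ := ht.1
    classical
    have hCfin : C.Finite := Set.toFinite C
    set g : Set V → V := fun e =>
      if h : e ∈ G.distBalls then h.choose else Classical.arbitrary V with hg
    have hres : G.IsResolvingSet (g '' C) := by
      intro u v huv
      obtain ⟨e, heC, hsep⟩ := hC.2.2 u v huv
      have heB : e ∈ G.distBalls := hC.1 heC
      obtain ⟨r, her⟩ := heB.choose_spec
      refine ⟨g e, Set.mem_image_of_mem g heC, ?_⟩
      have hge : g e = heB.choose := by simp [hg, heB]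
      rw [hge]
      rcases hsep with ⟨hu, hv⟩ | ⟨hv, hu⟩ <;>
        · rw [her] at hu hv
          simp only [Set.mem_setOf_eq] at hu hv
          omega
    have := hk.2 (g '' C) hres (hCfin.image g)
    calc k ≤ (g '' C).ncard := this
      _ ≤ C.ncard := Set.ncard_image_le hCfin
      _ = t := hCt
end

section
/- If G is a graph of order n with diameter d and a resolving set of size k, then n ≤ (dk+1)^{c} + 1, where c is the dual distance-VC dimension of G. -/
variable {V : Type*}

/-- A family `A` of hyperedges is shattered in the dual hypergraph: every subfamily
`B ⊆ A` is exactly the set of members of `A` containing some vertex `x`. -/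
def DualShatters (A : Set (Set V)) : Prop :=
  ∀ B ⊆ A, ∃ x : V, ∀ e ∈ A, x ∈ e ↔ e ∈ B

/-- `c` is the dual distance-VC dimension of `G`: the VC dimension of the dual of the
distance hypergraph of `G`. -/
def SimpleGraph.HasDualDistVCDim (G : SimpleGraph V) (c : ℕ) : Prop :=
  (∃ A ⊆ G.distBalls, DualShatters A ∧ A.ncard = c) ∧
    ∀ A ⊆ G.distBalls, DualShatters A → A.ncard ≤ c

private lemma sum_choose_le_aux (m c : ℕ) :
    ∑ i ∈ Finset.range (c + 1), m.choose i ≤ (m + 1) ^ c := by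
  induction c with
  | zero => simp
  | succ c ih =>
    rw [Finset.sum_range_succ]
    have h3 : m.choose c ≤ (m + 1) ^ c :=
      le_trans (Finset.single_le_sum (f := fun i => m.choose i)
        (fun _ _ => Nat.zero_le _) (Finset.self_mem_range_succ c)) ih
    have h1 : m.choose (c + 1) ≤ m * (m + 1) ^ c := by
      have h2 : m.choose (c + 1) ≤ m.choose c * m := by
        calc m.choose (c + 1) ≤ m.choose (c + 1) * (c + 1) :=
              Nat.le_mul_of_pos_right _ (Nat.succ_pos c)
          _ = m.choose c * (m - c) := Nat.choose_succ_right_eq m c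
          _ ≤ m.choose c * m := Nat.mul_le_mul_left _ (Nat.sub_le m c)
      calc m.choose (c + 1) ≤ m.choose c * m := h2
        _ ≤ (m + 1) ^ c * m := Nat.mul_le_mul_right _ h3
        _ = m * (m + 1) ^ c := Nat.mul_comm _ _
    calc ∑ i ∈ Finset.range (c + 1), m.choose i + m.choose (c + 1)
        ≤ (m + 1) ^ c + m * (m + 1) ^ c := Nat.add_le_add ih h1
      _ = (m + 1) ^ (c + 1) := by ring

/-- If `G` is a graph of order `n` with diameter `d` and a resolving set of size `k`, then
`n ≤ (dk+1)^c + 1`, where `c` is the dual distance-VC dimension of `G`. -/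
theorem statement12 [Fintype V] (G : SimpleGraph V) (hG : G.Connected)
    (d k c : ℕ) (hd : G.diam = d)
    (R : Finset V) (hR : G.IsResolvingSet ↑R) (hk : R.card = k)
    (hc : G.HasDualDistVCDim c) :
    Fintype.card V ≤ (d * k + 1) ^ c + 1 := by
  classical
  have hpow : (1 : ℕ) ≤ (d * k + 1) ^ c := Nat.one_le_pow _ _ (Nat.succ_pos _)
  by_cases hnt : ∃ u v : V, u ≠ v
  swap
  · push_neg at hnt
    have h1 : Fintype.card V ≤ 1 := Fintype.card_le_one_iff.mpr fun a b => hnt a b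
    omega
  obtain ⟨u₀, v₀, huv⟩ := hnt
  have hne : Nonempty V := ⟨u₀⟩
  have hetop : G.ediam ≠ ⊤ := by
    obtain ⟨a, b, hab⟩ := G.exists_edist_eq_ediam_of_finite
    rw [← hab]
    exact SimpleGraph.edist_ne_top_iff_reachable.mpr (hG.preconnected a b)
  have hd1 : 1 ≤ d := by
    have h0 : 0 < G.dist u₀ v₀ := hG.pos_dist_of_ne huv
    have h2 := G.dist_le_diam hetop (u := u₀) (v := v₀)
    omega
  -- the family of balls around resolving vertices with radii < d
  set bl : V × ℕ → Set V := fun p => {w | G.dist p.1 w ≤ p.2} with hbl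
  set E : Finset (Set V) := (R ×ˢ Finset.range d).image bl with hE
  have hEcard : E.card ≤ d * k := by
    calc E.card ≤ (R ×ˢ Finset.range d).card := Finset.card_image_le
      _ = k * d := by rw [Finset.card_product, hk, Finset.card_range]
      _ = d * k := Nat.mul_comm _ _
  have hEballs : ∀ e ∈ E, e ∈ G.distBalls := by
    intro e he
    simp only [hE, Finset.mem_image] at he
    obtain ⟨⟨x, r⟩, -, rfl⟩ := he
    exact ⟨x, r, rfl⟩
  set f : V → Finset (Set V) := fun u => E.filter (fun e => u ∈ e) with hf
  have hmemf : ∀ u e, e ∈ f u ↔ e ∈ E ∧ u ∈ e := by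
    intro u e; simp [hf]
  have hinj : Function.Injective f := by
    intro a b hab
    by_contra hne'
    obtain ⟨x, hxR, hdx⟩ := hR a b hne'
    have key : ∀ p q : V, f p = f q → G.dist x p < G.dist x q → False := by
      intro p q hpq hlt
      have hb : G.dist x q ≤ d := by
        have := G.dist_le_diam hetop (u := x) (v := q); omega
      have he : bl (x, G.dist x p) ∈ E :=
        Finset.mem_image_of_mem bl
          (Finset.mem_product.mpr ⟨hxR, Finset.mem_range.mpr (by omega)⟩)
      have ha : bl (x, G.dist x p) ∈ f p :=
        (hmemf _ _).mpr ⟨he, by simp [hbl]⟩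
      rw [hpq] at ha
      have hb2 := ((hmemf _ _).mp ha).2
      simp only [hbl, Set.mem_setOf_eq] at hb2
      omega
    rcases Nat.lt_or_ge (G.dist x a) (G.dist x b) with h | h
    · exact key a b hab h
    · exact key b a hab.symm (by omega)
  set 𝒜 : Finset (Finset (Set V)) := Finset.univ.image f with h𝒜
  have hcard𝒜 : 𝒜.card = Fintype.card V := by
    rw [h𝒜, Finset.card_image_of_injective _ hinj, Finset.card_univ]
  have hshatE : ∀ s, 𝒜.Shatters s → s ⊆ E := by
    intro s hs
    obtain ⟨u, hu, hsu⟩ := hs (Finset.Subset.refl s)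
    have h1 : s ⊆ u := Finset.inter_eq_right.mp (by rwa [Finset.inter_comm] at hsu)
    obtain ⟨w, -, rfl⟩ := Finset.mem_image.mp hu
    exact h1.trans (Finset.filter_subset _ _)
  have hshat : ∀ s ∈ 𝒜.shatterer, s.card ≤ c := by
    intro s hs
    rw [Finset.mem_shatterer] at hs
    have hsE : s ⊆ E := hshatE s hs
    have hsub : (↑s : Set (Set V)) ⊆ G.distBalls := fun e he =>
      hEballs e (hsE (Finset.mem_coe.mp he))
    have hds : DualShatters (↑s : Set (Set V)) := by
      intro B hB
      obtain ⟨u, hu𝒜, hsu⟩ := hs (Finset.filter_subset (fun e => e ∈ B) s)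
      obtain ⟨w, -, rfl⟩ := Finset.mem_image.mp hu𝒜
      refine ⟨w, fun e he => ?_⟩
      have he' : e ∈ s := Finset.mem_coe.mp he
      constructor
      · intro hwe
        have h2 : e ∈ s ∩ f w :=
          Finset.mem_inter.mpr ⟨he', (hmemf w e).mpr ⟨hsE he', hwe⟩⟩
        rw [hsu] at h2
        exact (Finset.mem_filter.mp h2).2
      · intro heB
        have h2 : e ∈ s.filter (fun e => e ∈ B) := Finset.mem_filter.mpr ⟨he', heB⟩
        rw [← hsu] at h2
        exact ((hmemf w e).mp (Finset.mem_inter.mp h2).2).2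
    have := hc.2 ↑s hsub hds
    rwa [Set.ncard_coe_finset] at this
  have hsub2 : 𝒜.shatterer ⊆ (Finset.range (c + 1)).biUnion (fun i => E.powersetCard i) := by
    intro s hs
    have h1 := hshat s hs
    have h2 : s ⊆ E := hshatE s (Finset.mem_shatterer.mp hs)
    exact Finset.mem_biUnion.mpr ⟨s.card, Finset.mem_range.mpr (by omega),
      Finset.mem_powersetCard.mpr ⟨h2, rfl⟩⟩
  calc Fintype.card V = 𝒜.card := hcard𝒜.symm
    _ ≤ 𝒜.shatterer.card := Finset.card_le_card_shatterer 𝒜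
    _ ≤ ((Finset.range (c + 1)).biUnion (fun i => E.powersetCard i)).card :=
        Finset.card_le_card hsub2
    _ ≤ ∑ i ∈ Finset.range (c + 1), (E.powersetCard i).card := Finset.card_biUnion_le
    _ = ∑ i ∈ Finset.range (c + 1), E.card.choose i := by
        simp [Finset.card_powersetCard]
    _ ≤ ∑ i ∈ Finset.range (c + 1), (d * k).choose i :=
        Finset.sum_le_sum (fun i _ => Nat.choose_le_choose i hEcard)
    _ ≤ (d * k + 1) ^ c := sum_choose_le_aux _ _
    _ ≤ (d * k + 1) ^ c + 1 := Nat.le_succ _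
end

section
/- If G is a graph of diameter d with distance-VC dimension dvc(G) and dual distance-VC dimension dvc*(G), then dvc*(G) ≤ d · dvc(G). -/
variable {V : Type*}

/-- A set `X` of vertices is shattered by the family `E`. -/
def ShattersSet (E : Set (Set V)) (X : Set V) : Prop :=
  ∀ Y ⊆ X, ∃ e ∈ E, e ∩ X = Y

/-- `c` is the distance-VC dimension of `G`: the VC dimension of its distance
hypergraph. -/
def SimpleGraph.HasDistVCDim (G : SimpleGraph V) (c : ℕ) : Prop :=
  (∃ X : Set V, ShattersSet G.distBalls X ∧ X.ncard = c) ∧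
    ∀ X : Set V, ShattersSet G.distBalls X → X.ncard ≤ c

/-!
Every ball of a dually shattered family `A` misses the vertex realising the empty subfamily,
so in a connected graph of diameter `d` it is a ball of some radius `r < d`. For each fixed
radius `r`, the balls of radius `r` in `A` are dually shattered, hence their centres are
shattered by the balls of radius `r` (as `x ∈ B(v, r) ↔ v ∈ B(x, r)`), so there are at most
`dvc(G)` of them. Summing over the `d` possible radii gives `dvc*(G) ≤ d · dvc(G)`.
-/

open Set

namespace SimpleGraph

def distBall (G : SimpleGraph V) (v : V) (r : ℕ) : Set V :=
  {u | G.dist v u ≤ r}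

variable {G : SimpleGraph V}

lemma distBall_mem_distBalls (v : V) (r : ℕ) : G.distBall v r ∈ G.distBalls :=
  ⟨v, r, rfl⟩

lemma mem_distBall_comm {u v : V} {r : ℕ} : u ∈ G.distBall v r ↔ v ∈ G.distBall u r := by
  show G.dist v u ≤ r ↔ G.dist u v ≤ r
  rw [dist_comm]

lemma Connected.distBall_eq_univ [Finite V] (hG : G.Connected) (v : V) {r : ℕ}
    (hr : G.diam ≤ r) : G.distBall v r = univ := by
  have : Nonempty V := hG.nonempty
  exact eq_univ_of_forall fun u =>
    (G.dist_le_diam (G.connected_iff_ediam_ne_top.mp hG)).trans hr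

end SimpleGraph

open SimpleGraph

lemma DualShatters.mono {A B : Set (Set V)} (hA : DualShatters A) (hBA : B ⊆ A) :
    DualShatters B := by
  intro C hCB
  obtain ⟨x, hx⟩ := hA C (hCB.trans hBA)
  exact ⟨x, fun e he => hx e (hBA he)⟩

lemma DualShatters.ne_univ {A : Set (Set V)} (hA : DualShatters A) {e : Set V} (he : e ∈ A) :
    e ≠ univ := by
  obtain ⟨x, hx⟩ := hA ∅ (empty_subset A)
  rintro rfl
  exact (hx univ he).mp (mem_univ x)

lemma shattersSet_of_dualShatters_image {G : SimpleGraph V} {S : Set V} {r : ℕ}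
    (hinj : InjOn (G.distBall · r) S) (h : DualShatters ((G.distBall · r) '' S)) :
    ShattersSet G.distBalls S := by
  intro Y hYS
  obtain ⟨x, hx⟩ := h ((G.distBall · r) '' Y) (image_mono hYS)
  refine ⟨G.distBall x r, distBall_mem_distBalls x r, ?_⟩
  ext u
  constructor
  · rintro ⟨hxu, huS⟩
    obtain ⟨y, hyY, hyu⟩ := (hx _ (mem_image_of_mem _ huS)).mp (mem_distBall_comm.mp hxu)
    exact hinj (hYS hyY) huS hyu ▸ hyY
  · intro huY
    exact ⟨mem_distBall_comm.mp ((hx _ (mem_image_of_mem _ (hYS huY))).mpr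
      (mem_image_of_mem _ huY)), hYS huY⟩

lemma ncard_le_of_dualShatters_image {G : SimpleGraph V} {c : ℕ}
    (hc : ∀ X : Set V, ShattersSet G.distBalls X → X.ncard ≤ c) {S : Set V} {r : ℕ}
    (h : DualShatters ((G.distBall · r) '' S)) : ((G.distBall · r) '' S).ncard ≤ c := by
  obtain ⟨T, hTS, hinj⟩ := exists_image_eq_and_injOn S (G.distBall · r)
  rw [← hTS] at h ⊢
  rw [hinj.ncard_image]
  exact hc T (shattersSet_of_dualShatters_image hinj h)

lemma DualShatters.subset_iUnion_distBall [Finite V] {G : SimpleGraph V} (hG : G.Connected)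
    {A : Set (Set V)} (hAG : A ⊆ G.distBalls) (hA : DualShatters A) :
    A ⊆ ⋃ r : Fin G.diam, (G.distBall · r) '' {v | G.distBall v r ∈ A} := by
  intro e he
  obtain ⟨v, r, rfl⟩ := hAG he
  have hr : r < G.diam := by
    by_contra! hr
    exact hA.ne_univ he (hG.distBall_eq_univ v hr)
  exact mem_iUnion.mpr ⟨⟨r, hr⟩, v, he, rfl⟩

/-- If `G` is a graph of diameter `d` with distance-VC dimension `dvc(G)` and dual
distance-VC dimension `dvc*(G)`, then `dvc*(G) ≤ d · dvc(G)`. -/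
theorem statement13 [Fintype V] (G : SimpleGraph V) (hG : G.Connected)
    (d c cstar : ℕ) (hd : G.diam = d)
    (hc : G.HasDistVCDim c) (hcstar : G.HasDualDistVCDim cstar) :
    cstar ≤ d * c := by
  obtain ⟨⟨A, hAG, hA, rfl⟩, -⟩ := hcstar
  subst hd
  calc A.ncard
      ≤ (⋃ r : Fin G.diam, (G.distBall · r) '' {v | G.distBall v r ∈ A}).ncard :=
        ncard_le_ncard (hA.subset_iUnion_distBall hG hAG) (toFinite _)
    _ ≤ ∑ r : Fin G.diam, ((G.distBall · r) '' {v | G.distBall v r ∈ A}).ncard :=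
        ncard_iUnion_le_of_fintype _
    _ ≤ ∑ _r : Fin G.diam, c := Finset.sum_le_sum fun r _ =>
        ncard_le_of_dualShatters_image hc.2 (hA.mono (image_preimage_subset _ A))
    _ = G.diam * c := by simp
end

section
/- If G is a K_t-minor-free graph of order n and diameter d with a resolving set of size k, then n ≤ (dk+1)^{t−1} + 1. -/
variable {V : Type*}

/-- `G` contains `K_t` as a minor: there exist `t` pairwise disjoint non-empty connected
vertex subsets of `G` with an edge between every two of them. -/
def SimpleGraph.HasCompleteMinor (G : SimpleGraph V) (t : ℕ) : Prop :=
  ∃ C : Fin t → Set V,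
    (∀ i, (C i).Nonempty) ∧
    (∀ i, (G.induce (C i)).Connected) ∧
    (∀ i j, i ≠ j → Disjoint (C i) (C j)) ∧
    (∀ i j, i ≠ j → ∃ a ∈ C i, ∃ b ∈ C j, G.Adj a b)

/-!
Send each vertex `v` to the set of balls `B(x, r)`, `x ∈ R`, `r < d`, that contain it. As `R` is
resolving and all distances are at most `d`, this is injective, so `n` is at most the size of a
family of subsets of a `dk`-element set.

This family has VC dimension `< t` (Chepoi–Estellon–Vaxès): if it shattered `t` balls `B(cᵢ, rᵢ)`,
put each vertex `u` in the region of the ball minimising `dist(cᵢ, u) - rᵢ` (ties broken by index).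
A geodesic from `u` towards `cᵢ` decreases that excess fastest for ball `i`, so it stays in region
`i`, making the regions connected; a geodesic towards `cⱼ` from a vertex lying exactly in balls
`i` and `j` stays in regions `i` and `j`, hence crosses an edge between them. The regions are then
the branch sets of a `K_t` minor. The Sauer–Shelah lemma finishes: `n ≤ ∑_{j < t} (dk choose j)
≤ (dk + 1)^(t - 1)`.
-/

theorem Prod.Lex.toLex_le_toLex_of_sub_le {α β : Type*} [AddCommGroup α] [LinearOrder α]
    [IsOrderedAddMonoid α] [Preorder β] {a b a' b' : α} {i j : β}
    (h : toLex (a, i) ≤ toLex (b, j)) (h' : a' - a ≤ b' - b) :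
    toLex (a', i) ≤ toLex (b', j) := by
  simp only [Prod.Lex.toLex_le_toLex] at h ⊢
  rcases h with h | ⟨rfl, hij⟩
  · exact Or.inl (by simpa using add_lt_add_of_le_of_lt h' h)
  · rcases (sub_le_sub_iff_right a).mp h' |>.lt_or_eq with h | h
    · exact Or.inl h
    · exact Or.inr ⟨h, hij⟩

theorem Nat.sum_Iic_choose_le_pow (m s : ℕ) : ∑ j ∈ Finset.Iic s, m.choose j ≤ (m + 1) ^ s := by
  rw [add_pow, ← Nat.range_succ_eq_Iic]
  refine Finset.sum_le_sum fun j hj => ?_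
  rw [one_pow, mul_one]
  exact (Nat.choose_le_pow m j).trans
    (Nat.le_mul_of_pos_right _ (Nat.choose_pos (Nat.lt_succ_iff.mp (Finset.mem_range.mp hj))))

namespace SimpleGraph

variable {G : SimpleGraph V}

theorem Walk.dist_add_dist_le_of_mem_support [DecidableEq V] {u v w : V} (p : G.Walk u v)
    (hp : p.length = G.dist u v) (hw : w ∈ p.support) :
    G.dist u w + G.dist w v ≤ G.dist u v := by
  rw [← hp, ← p.take_spec hw, Walk.length_append]
  exact add_le_add (G.dist_le _) (G.dist_le _)

noncomputable def ballExcess (G : SimpleGraph V) (c : V) (r : ℕ) (u : V) : ℤ := G.dist c u - r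

theorem ballExcess_lt_ballExcess {c c' u : V} {r r' : ℕ} (hu : G.dist c u ≤ r)
    (hu' : r' < G.dist c' u) : G.ballExcess c r u < G.ballExcess c' r' u := by
  unfold ballExcess
  omega

section BallRegion

variable {t : ℕ} {c : Fin t → V} {r : Fin t → ℕ}

noncomputable def ballKey (G : SimpleGraph V) (c : Fin t → V) (r : Fin t → ℕ) (u : V)
    (i : Fin t) : ℤ ×ₗ Fin t :=
  toLex (G.ballExcess (c i) (r i) u, i)

def ballRegion (G : SimpleGraph V) (c : Fin t → V) (r : Fin t → ℕ) (i : Fin t) : Set V :=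
  {u | ∀ j, G.ballKey c r u i ≤ G.ballKey c r u j}

theorem ballKey_injective (u : V) : Function.Injective (G.ballKey c r u) :=
  fun _ _ h => congrArg (fun x => (ofLex x).2) h

theorem disjoint_ballRegion {i j : Fin t} (hij : i ≠ j) :
    Disjoint (G.ballRegion c r i) (G.ballRegion c r j) :=
  Set.disjoint_left.mpr fun _ hi hj => hij (ballKey_injective _ (le_antisymm (hi j) (hj i)))

theorem exists_mem_ballRegion {u : V} {S : Finset (Fin t)} {b : Fin t}
    (h : ∀ l ∉ S, G.ballExcess (c b) (r b) u < G.ballExcess (c l) (r l) u) :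
    ∃ i ∈ S, u ∈ G.ballRegion c r i := by
  have : Nonempty (Fin t) := ⟨b⟩
  obtain ⟨m, hm⟩ := Finite.exists_min (G.ballKey c r u)
  refine ⟨m, ?_, hm⟩
  by_contra hmS
  exact (hm b).not_gt (Prod.Lex.toLex_lt_toLex.mpr (Or.inl (h m hmS)))

theorem mem_ballRegion_of_mem_support [DecidableEq V] (hG : G.Connected) {i : Fin t}
    {u w : V} (hu : u ∈ G.ballRegion c r i) (p : G.Walk (c i) u) (hp : p.length = G.dist (c i) u)
    (hw : w ∈ p.support) : w ∈ G.ballRegion c r i := by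
  intro j
  refine Prod.Lex.toLex_le_toLex_of_sub_le (hu j) ?_
  have hsplit := p.dist_add_dist_le_of_mem_support hp hw
  have htri : G.dist (c j) u ≤ G.dist (c j) w + G.dist w u := hG.dist_triangle
  unfold ballExcess
  omega

theorem center_mem_ballRegion (hG : G.Connected) {i : Fin t}
    (hne : (G.ballRegion c r i).Nonempty) : c i ∈ G.ballRegion c r i := by
  classical
  obtain ⟨u, hu⟩ := hne
  obtain ⟨p, hp⟩ := hG.exists_walk_length_eq_dist (c i) u
  exact mem_ballRegion_of_mem_support hG hu p hp p.start_mem_support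

theorem connected_induce_ballRegion (hG : G.Connected) {i : Fin t}
    (hne : (G.ballRegion c r i).Nonempty) : (G.induce (G.ballRegion c r i)).Connected := by
  classical
  refine G.induce_connected_of_patches (c i) (center_mem_ballRegion hG hne) fun {v} hv => ?_
  obtain ⟨p, hp⟩ := hG.exists_walk_length_eq_dist (c i) v
  exact ⟨{w | w ∈ p.support}, fun w hw => mem_ballRegion_of_mem_support hG hv p hp hw,
    p.start_mem_support, p.end_mem_support, p.connected_induce_support.preconnected _ _⟩

theorem exists_adj_ballRegion (hG : G.Connected) {a b : Fin t} (hab : a ≠ b) {v : V}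
    (hv : v ∈ G.ballRegion c r a) (hb : (G.ballRegion c r b).Nonempty)
    (h : ∀ l ∉ ({a, b} : Finset (Fin t)),
      G.ballExcess (c b) (r b) v < G.ballExcess (c l) (r l) v) :
    ∃ x ∈ G.ballRegion c r a, ∃ y ∈ G.ballRegion c r b, G.Adj x y := by
  classical
  obtain ⟨p, hp⟩ := hG.exists_walk_length_eq_dist (c b) v
  have hsupport : ∀ w ∈ p.support, w ∈ G.ballRegion c r a ∨ w ∈ G.ballRegion c r b := by
    intro w hw
    have hsplit := p.dist_add_dist_le_of_mem_support hp hw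
    obtain ⟨i, hi, hwi⟩ := exists_mem_ballRegion (G := G) (c := c) (r := r) (u := w) (b := b)
      fun l hl => by
        have hvl := h l hl
        have htri : G.dist (c l) v ≤ G.dist (c l) w + G.dist w v := hG.dist_triangle
        unfold ballExcess at hvl ⊢
        omega
    rcases Finset.mem_insert.mp hi with rfl | hi
    · exact Or.inl hwi
    · exact Or.inr (Finset.mem_singleton.mp hi ▸ hwi)
  have hvb : v ∉ G.ballRegion c r b := Set.disjoint_left.mp (disjoint_ballRegion hab) hv
  obtain ⟨e, he, hfst, hsnd⟩ := p.exists_boundary_dart _ (center_mem_ballRegion hG hb) hvb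
  exact ⟨e.snd, (hsupport _ (p.dart_snd_mem_support_of_mem_darts he)).resolve_right hsnd,
    e.fst, hfst, e.adj.symm⟩

end BallRegion

theorem hasCompleteMinor_of_balls_shatter_pairs {t : ℕ} (hG : G.Connected) (c : Fin t → V)
    (r : Fin t → ℕ)
    (h : ∀ S : Finset (Fin t), S.card ≤ 2 → ∃ v, ∀ i, G.dist (c i) v ≤ r i ↔ i ∈ S) :
    G.HasCompleteMinor t := by
  have hexcess : ∀ {S : Finset (Fin t)} {v : V}, (∀ i, G.dist (c i) v ≤ r i ↔ i ∈ S) →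
      ∀ b ∈ S, ∀ l ∉ S, G.ballExcess (c b) (r b) v < G.ballExcess (c l) (r l) v :=
    fun hv b hb l hl => ballExcess_lt_ballExcess ((hv b).mpr hb) (not_le.mp ((hv l).not.mpr hl))
  have hnonempty : ∀ i, (G.ballRegion c r i).Nonempty := by
    intro i
    obtain ⟨v, hv⟩ := h {i} (by simp)
    obtain ⟨j, hj, hvj⟩ := exists_mem_ballRegion (hexcess hv i (Finset.mem_singleton_self i))
    exact ⟨v, Finset.mem_singleton.mp hj ▸ hvj⟩
  refine ⟨G.ballRegion c r, hnonempty, fun i => connected_induce_ballRegion hG (hnonempty i),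
    fun i j => disjoint_ballRegion, fun i j hij => ?_⟩
  obtain ⟨v, hv⟩ := h {i, j} Finset.card_le_two
  obtain ⟨a, ha, hva⟩ := exists_mem_ballRegion (hexcess hv i (Finset.mem_insert_self i _))
  rcases Finset.mem_insert.mp ha with rfl | ha
  · exact exists_adj_ballRegion hG hij hva (hnonempty j)
      (hexcess hv j (Finset.mem_insert_of_mem (Finset.mem_singleton_self j)))
  · obtain rfl := Finset.mem_singleton.mp ha
    obtain ⟨x, hx, y, hy, hxy⟩ := exists_adj_ballRegion hG hij.symm hva (hnonempty i)
      (by simpa only [Finset.pair_comm] using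
        hexcess hv i (Finset.mem_insert_self i _))
    exact ⟨y, hy, x, hx, hxy.symm⟩


section BallFamily

variable {R : Finset V} {d : ℕ}

noncomputable def ballSet (G : SimpleGraph V) (R : Finset V) (d : ℕ) (v : V) :
    Finset (R × Fin d) :=
  {e | G.dist e.1 v ≤ e.2}

theorem mem_ballSet {v : V} {e : R × Fin d} : e ∈ G.ballSet R d v ↔ G.dist e.1 v ≤ e.2 := by
  simp [ballSet]

noncomputable def ballFamily [Fintype V] [DecidableEq V] (G : SimpleGraph V) (R : Finset V)
    (d : ℕ) : Finset (Finset (R × Fin d)) :=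
  Finset.univ.image (G.ballSet R d)

theorem ballSet_injective (hR : G.IsResolvingSet R) (hd : ∀ u v, G.dist u v ≤ d) :
    Function.Injective (G.ballSet R d) := by
  intro u v huv
  by_contra hne
  obtain ⟨x, hx, hxd⟩ := hR u v hne
  wlog hlt : G.dist x u < G.dist x v generalizing u v
  · exact this huv.symm (Ne.symm hne) hxd.symm (by omega)
  have hmem : (⟨x, hx⟩, ⟨G.dist x u, hlt.trans_le (hd x v)⟩) ∈ G.ballSet R d u := by
    simp [mem_ballSet]
  rw [huv, mem_ballSet] at hmem
  exact hlt.not_ge hmem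

theorem hasCompleteMinor_of_shatters_ballFamily [Fintype V] [DecidableEq V] (hG : G.Connected)
    {s : Finset (R × Fin d)} (hs : (G.ballFamily R d).Shatters s) :
    G.HasCompleteMinor s.card := by
  let e : Fin s.card ↪ R × Fin d :=
    s.equivFin.symm.toEmbedding.trans (Function.Embedding.subtype _)
  refine hasCompleteMinor_of_balls_shatter_pairs hG (fun i => (e i).1) (fun i => (e i).2)
    fun S _ => ?_
  obtain ⟨u, hu, hsu⟩ := hs (t := S.map e) fun x hx => by
    obtain ⟨i, -, rfl⟩ := Finset.mem_map.mp hx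
    exact (s.equivFin.symm i).2
  obtain ⟨v, -, rfl⟩ := Finset.mem_image.mp hu
  refine ⟨v, fun i => ?_⟩
  rw [← mem_ballSet, ← Finset.mem_map' e, ← hsu, Finset.mem_inter]
  exact (and_iff_right (s.equivFin.symm i).2).symm

theorem vcDim_ballFamily_le [Fintype V] [DecidableEq V] (hG : G.Connected) {t : ℕ}
    (hminor : ¬ G.HasCompleteMinor t) : (G.ballFamily R d).vcDim ≤ t - 1 := by
  refine Finset.sup_le fun s hs => ?_
  suffices s.card < t by omega
  by_contra! hts
  obtain ⟨s', hs's, hcard⟩ := Finset.exists_subset_card_eq hts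
  exact hminor (hcard ▸ hasCompleteMinor_of_shatters_ballFamily hG
    ((Finset.mem_shatterer.mp hs).mono_right hs's))

end BallFamily

end SimpleGraph

open Finset in
/-- If `G` is a `K_t`-minor-free graph of order `n` and diameter `d` with a resolving set
of size `k`, then `n ≤ (dk+1)^{t−1} + 1`. -/
theorem statement16 [Fintype V] (G : SimpleGraph V) (hG : G.Connected)
    (t d k : ℕ) (hminor : ¬ G.HasCompleteMinor t) (hd : G.diam = d)
    (R : Finset V) (hR : G.IsResolvingSet ↑R) (hk : R.card = k) :
    Fintype.card V ≤ (d * k + 1) ^ (t - 1) + 1 := by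
  classical
  have : Nonempty V := hG.nonempty
  have hdist : ∀ u v, G.dist u v ≤ d :=
    fun u v => hd ▸ G.dist_le_diam (SimpleGraph.connected_iff_ediam_ne_top.mp hG)
  calc Fintype.card V = #(G.ballFamily R d) :=
        (card_image_of_injective _ (SimpleGraph.ballSet_injective hR hdist)).symm
    _ ≤ #(G.ballFamily R d).shatterer := card_le_card_shatterer _
    _ ≤ ∑ j ∈ Iic (G.ballFamily R d).vcDim, (Fintype.card (R × Fin d)).choose j :=
        card_shatterer_le_sum_vcDim
    _ ≤ ∑ j ∈ Iic (t - 1), (d * k).choose j := by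
        rw [Fintype.card_prod, Fintype.card_coe, Fintype.card_fin, hk, mul_comm]
        exact sum_le_sum_of_subset
          (Iic_subset_Iic.mpr (SimpleGraph.vcDim_ballFamily_le hG hminor))
    _ ≤ (d * k + 1) ^ (t - 1) + 1 := (Nat.sum_Iic_choose_le_pow _ _).trans (Nat.le_succ _)
end
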